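/- Let F : [0,1]ⁿ → ℝ be continuous submodular and let Z_l maximize z ↦ F(z, Y^{(i-1)}_{-i}) over [0,1], with Y^{(i-1)}_{-i} ≥ X^{(i-1)}_{-i}. Then F(X^{(i)}) - F(X^{(i-1)}) ≥ F(ẑ_i, X^{(i-1)}_{-i}) - F(Z_l, X^{(i-1)}_{-i}), where X^{(i)} agrees with X^{(i-1)} except coordinate i is set to ẑ_i and coordinate i of X^{(i-1)} is 0. -/

import Mathlib

/-!
Submodularity gives diminishing returns along a coordinate: raising coordinate `i` from `a` to
`b` gains at least as much at a point `x` as at any point `y ≥ x` (off `i`). Applied with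
`a = 0`, `b = Zl`, this bounds `F (x[i ↦ Zl]) - F x` below by `F (y[i ↦ Zl]) - F (y[i ↦ 0])`,
which is nonnegative because `Zl` maximises `z ↦ F (y[i ↦ z])`.
-/

open Function Set

theorem Function.update_mem_Icc {ι : Type*} {π : ι → Type*} [DecidableEq ι]
    [∀ i, Preorder (π i)] {l u x : ∀ i, π i} (hx : x ∈ Icc l u) {i : ι} {b : π i}
    (hb : b ∈ Icc (l i) (u i)) : update x i b ∈ Icc l u :=
  ⟨le_update_iff.2 ⟨hb.1, fun j _ => hx.1 j⟩, update_le_iff.2 ⟨hb.2, fun j _ => hx.2 j⟩⟩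

theorem sub_update_le_sub_update_of_submodularOn {ι β : Type*} [DecidableEq ι] [Lattice β]
    {F : (ι → β) → ℝ} {s : Set (ι → β)}
    (hF : ∀ x ∈ s, ∀ y ∈ s, F (x ⊔ y) + F (x ⊓ y) ≤ F x + F y)
    {x y : ι → β} {i : ι} (hxy : ∀ j ≠ i, x j ≤ y j) {a b : β} (hab : a ≤ b)
    (hxb : update x i b ∈ s) (hya : update y i a ∈ s) :
    F (update y i b) - F (update y i a) ≤ F (update x i b) - F (update x i a) := by
  have hsup : update x i b ⊔ update y i a = update y i b := by
    funext j
    rcases eq_or_ne j i with rfl | hj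
    · simp [hab]
    · simp [update_of_ne hj, hxy j hj]
  have hinf : update x i b ⊓ update y i a = update x i a := by
    funext j
    rcases eq_or_ne j i with rfl | hj
    · simp [hab]
    · simp [update_of_ne hj, hxy j hj]
  have hpair := hF _ hxb _ hya
  rw [hsup, hinf] at hpair
  linarith

theorem stmt_13_general (n : ℕ) (F : (Fin n → ℝ) → ℝ)
    (hsub : ∀ x y : Fin n → ℝ, x ∈ Set.Icc (0:Fin n → ℝ) 1 → y ∈ Set.Icc (0:Fin n → ℝ) 1 →
      F x + F y ≥ F (x ⊔ y) + F (x ⊓ y))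
    (i : Fin n) (Xprev Yprev : Fin n → ℝ)
    (hXbox : Xprev ∈ Set.Icc (0:Fin n → ℝ) 1) (hYbox : Yprev ∈ Set.Icc (0:Fin n → ℝ) 1)
    (hXi : Xprev i = 0)
    (hXY : ∀ j, j ≠ i → Xprev j ≤ Yprev j)
    (Zl : ℝ) (hZl : Zl ∈ Set.Icc (0:ℝ) 1)
    (hargmax : ∀ z ∈ Set.Icc (0:ℝ) 1,
      F (Function.update Yprev i z) ≤ F (Function.update Yprev i Zl))
    (zhat : ℝ) :
    F (Function.update Xprev i zhat) - F Xprev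
      ≥ F (Function.update Xprev i zhat) - F (Function.update Xprev i Zl) := by
  have h01 : (0 : ℝ) ∈ Icc (0 : ℝ) 1 := ⟨le_rfl, zero_le_one⟩
  have hgain := sub_update_le_sub_update_of_submodularOn (fun x hx y hy => hsub x y hx hy)
    hXY hZl.1 (update_mem_Icc hXbox hZl) (update_mem_Icc hYbox h01)
  have hX0 : update Xprev i 0 = Xprev := hXi ▸ update_eq_self i Xprev
  rw [hX0] at hgain
  linarith [hargmax 0 h01]

theorem stmt_13 (n : ℕ) (F : (Fin n → ℝ) → ℝ)
    (hsub : ∀ x y : Fin n → ℝ, x ∈ Set.Icc (0:Fin n → ℝ) 1 → y ∈ Set.Icc (0:Fin n → ℝ) 1 →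
      F x + F y ≥ F (x ⊔ y) + F (x ⊓ y))
    (i : Fin n) (Xprev Yprev : Fin n → ℝ)
    (hXbox : Xprev ∈ Set.Icc (0:Fin n → ℝ) 1) (hYbox : Yprev ∈ Set.Icc (0:Fin n → ℝ) 1)
    (hXi : Xprev i = 0) (hYi : Yprev i = 1)
    (hXY : ∀ j, j ≠ i → Xprev j ≤ Yprev j)
    (Zl : ℝ) (hZl : Zl ∈ Set.Icc (0:ℝ) 1)
    (hargmax : ∀ z ∈ Set.Icc (0:ℝ) 1,
      F (Function.update Yprev i z) ≤ F (Function.update Yprev i Zl))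
    (zhat : ℝ) (hzhat : zhat ∈ Set.Icc (0:ℝ) 1) :
    F (Function.update Xprev i zhat) - F Xprev
      ≥ F (Function.update Xprev i zhat) - F (Function.update Xprev i Zl) :=
  stmt_13_general n F hsub i Xprev Yprev hXbox hYbox hXi hXY Zl hZl hargmax zhat
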